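/- Let G be a finite normal form game with strict preferences, a₀ ∈ A an initial reference point, k a positive integer, and I an admissible player function. Then the subgame perfect equilibrium outcome of Γ(a₀,k,I) is unique: any two subgame perfect equilibria of Γ(a₀,k,I) have the same outcome. -/

import Mathlib

/-!
Backward induction on a finite tree. Admissibility makes the players move in rounds of `n`,
so a round of passes only is terminal and every round of a play contains an action; since
an action can be repeated at a given state at most `k` times, plays have bounded length.
If two subgame perfect equilibria `σ`, `σ'` have the same outcome at every child of `h`,
the active player at `h` can deviate once from `σ` to the move of `σ'` and obtain the
outcome of `σ'`, so prefers the outcome of `σ` weakly, and symmetrically; strict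
preferences make the two outcomes equal.
-/

namespace NoHarm

/-- A finite normal form game with `n` players: finite action sets `A i`,
nonempty, with decidable equality, and utility functions `u i : Profile → ℝ`. -/
structure Game (n : ℕ) where
  A : Fin n → Type
  fintypeA : ∀ i, Fintype (A i)
  decA : ∀ i, DecidableEq (A i)
  neA : ∀ i, Nonempty (A i)
  u : Fin n → (∀ i, A i) → ℝ

attribute [instance] Game.fintypeA Game.decA Game.neA

/-- Action profiles of `G`. -/
abbrev Profile {n : ℕ} (G : Game n) : Type := ∀ i, G.A i

/-- A recorded move in the extensive form game `Γ`: the acting player together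
with their choice (`none` = pass, `some a` = choose action `a`; choosing the
current component of the state is "staying", any other action is "moving"). -/
abbrev Move {n : ℕ} (G : Game n) : Type := Σ i : Fin n, Option (G.A i)

/-- A node of `Γ`, identified with the history of moves leading to it
(the root is `[]`). -/
abbrev Hist {n : ℕ} (G : Game n) : Type := List (Move G)

variable {n : ℕ}

/-- One step of the left fold computing, along a history, the triple
(current state, current reference point, player who established the current
reference point by staying -- `none` for the initial reference point). -/
def stepFold (G : Game n) (x : Profile G × Profile G × Option (Fin n)) (m : Move G) :
    Profile G × Profile G × Option (Fin n) :=
  match m with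
  | ⟨_, none⟩ => x
  | ⟨i, some a⟩ =>
    if a = x.1 i then (x.1, x.1, some i)
    else (Function.update x.1 i a, x.2.1, x.2.2)

/-- The (state, reference point, proposer) data at the node `h` of `Γ(a0,·,·)`. -/
def fold3 (G : Game n) (a0 : Profile G) (h : Hist G) :
    Profile G × Profile G × Option (Fin n) :=
  h.foldl (stepFold G) (a0, a0, none)

/-- The state `S(x)` at a node. -/
def state (G : Game n) (a0 : Profile G) (h : Hist G) : Profile G := (fold3 G a0 h).1

/-- The reference point at a node (the most recent state at which a player
stayed, initially `a0`). -/
def refpt (G : Game n) (a0 : Profile G) (h : Hist G) : Profile G := (fold3 G a0 h).2.1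

/-- The player who established the current reference point by staying
(`none` if it is still the initial reference point `a0`). -/
def proposer (G : Game n) (a0 : Profile G) (h : Hist G) : Option (Fin n) :=
  (fold3 G a0 h).2.2

/-- `m` is a stay action at the node `h`: the mover chooses exactly the
component of the current state belonging to them. -/
def IsStay (G : Game n) (a0 : Profile G) (h : Hist G) (m : Move G) : Prop :=
  m.2 = some (state G a0 h m.1)

/-- Termination condition (i): one player stayed at a state `b`, making it
the reference point, and a different player subsequently also stays at `b`. -/
def TerminalStay (G : Game n) (a0 : Profile G) (h : Hist G) : Prop :=
  ∃ (h' : Hist G) (m : Move G) (i : Fin n),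
    h = h' ++ [m] ∧ IsStay G a0 h' m ∧ refpt G a0 h' = state G a0 h' ∧
    proposer G a0 h' = some i ∧ i ≠ m.1

/-- Termination condition (ii): all `n` players consecutively pass
(the last `n` moves are passes and every player is among their movers). -/
def TerminalPass (G : Game n) (h : Hist G) : Prop :=
  n ≤ h.length ∧ (∀ m ∈ h.drop (h.length - n), m.2 = none) ∧
    (∀ i : Fin n, ∃ m ∈ h.drop (h.length - n), m.1 = i)

/-- Terminal nodes of `Γ(a0,·,·)`. -/
def Terminal (G : Game n) (a0 : Profile G) (h : Hist G) : Prop :=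
  TerminalStay G a0 h ∨ TerminalPass G h

/-- Number of predecessor nodes of `h` having the same state as `h` at which
the move `m` was made. -/
def countAct (G : Game n) (a0 : Profile G) (h : Hist G) (m : Move G) : ℕ :=
  ((Finset.range h.length).filter
    (fun t => h[t]? = some m ∧ state G a0 (h.take t) = state G a0 h)).card

/-- Availability of the choice `c` for player `i` at node `h`: pass is always
available, and an action `a` is available iff `i` has chosen `a` at fewer than
`k` predecessor nodes carrying the same state as `h`. -/
def availAct (G : Game n) (a0 : Profile G) (k : ℕ) (h : Hist G) {i : Fin n}
    (c : Option (G.A i)) : Prop :=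
  ∀ a : G.A i, c = some a → countAct G a0 h ⟨i, some a⟩ < k

/-- `h` is a (valid) node of the game tree of `Γ(a0,k,I)`: at each step the
recorded mover is the active player given by the player function `I`, the
chosen action was available, and no proper predecessor is terminal. -/
structure IsNode (G : Game n) (a0 : Profile G) (k : ℕ) (I : Hist G → Fin n)
    (h : Hist G) : Prop where
  mover : ∀ (t : ℕ) (ht : t < h.length), (h.get ⟨t, ht⟩).1 = I (h.take t)
  avail : ∀ (t : ℕ) (ht : t < h.length), availAct G a0 k (h.take t) (h.get ⟨t, ht⟩).2
  nonterm : ∀ t < h.length, ¬ Terminal G a0 (h.take t)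

/-- The player function is admissible: along every path of play the numbers of
nodes at which any two players have been active differ by at most one. -/
def Admissible (G : Game n) (a0 : Profile G) (k : ℕ) (I : Hist G → Fin n) : Prop :=
  ∀ h, IsNode G a0 k I h → ∀ i j : Fin n,
    (h.map Sigma.fst).count i ≤ (h.map Sigma.fst).count j + 1

/-- A pure strategy of player `i`: a choice (pass or an action) at every node. -/
abbrev Strategy (G : Game n) (i : Fin n) : Type := Hist G → Option (G.A i)

/-- A pure strategy profile. -/
abbrev StratProfile (G : Game n) : Type := ∀ i, Strategy G i

/-- A strategy profile is valid if at every non-terminal node of the tree the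
active player's prescribed choice is available. -/
def ValidProfile (G : Game n) (a0 : Profile G) (k : ℕ) (I : Hist G → Fin n)
    (σ : StratProfile G) : Prop :=
  ∀ h, IsNode G a0 k I h → ¬ Terminal G a0 h → availAct G a0 k h (σ (I h) h)

open Classical in
/-- Play according to `σ` for (at most) the given number of steps from a node,
stopping at terminal nodes. -/
noncomputable def playN (G : Game n) (a0 : Profile G) (I : Hist G → Fin n)
    (σ : StratProfile G) : ℕ → Hist G → Hist G
  | 0, h => h
  | (t + 1), h =>
    if Terminal G a0 h then h
    else playN G a0 I σ t (h ++ [⟨I h, σ (I h) h⟩])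

/-- A (generous) upper bound for the length of any play of `Γ(a0,k,I)`. -/
def bound (G : Game n) (k : ℕ) : ℕ :=
  ((k + 2) * (Fintype.card (Profile G) + 2) * ((∑ i, Fintype.card (G.A i)) + 2) + 2)
    * (n + 2) * 4

/-- The outcome of `σ` in the subgame rooted at `h`: the reference point at the
terminal node reached by playing `σ` from `h`. -/
noncomputable def outcomeFrom (G : Game n) (a0 : Profile G) (k : ℕ)
    (I : Hist G → Fin n) (σ : StratProfile G) (h : Hist G) : Profile G :=
  refpt G a0 (playN G a0 I σ (bound G k + 1) h)

/-- The outcome of the strategy profile `σ` in `Γ(a0,k,I)`. -/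
noncomputable def outcome (G : Game n) (a0 : Profile G) (k : ℕ)
    (I : Hist G → Fin n) (σ : StratProfile G) : Profile G :=
  outcomeFrom G a0 k I σ []

/-- `σ` satisfies the no-harm principle: every stay action it prescribes, at
every (on- or off-path) non-terminal node of the tree, does not harm any other
player relative to the reference point at that node. -/
def SatNHP (G : Game n) (a0 : Profile G) (k : ℕ) (I : Hist G → Fin n)
    (σ : StratProfile G) : Prop :=
  ∀ h, IsNode G a0 k I h → ¬ Terminal G a0 h →
    σ (I h) h = some (state G a0 h (I h)) →
    ∀ j, j ≠ I h → G.u j (refpt G a0 h) ≤ G.u j (state G a0 h)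

/-- No-harm equilibrium of `Γ(a0,k,I)`: a valid strategy profile satisfying the
NHP such that at every non-terminal node the active player's choice is a best
response among deviations keeping the profile valid and NHP-compliant. -/
def NHE (G : Game n) (a0 : Profile G) (k : ℕ) (I : Hist G → Fin n)
    (σ : StratProfile G) : Prop :=
  ValidProfile G a0 k I σ ∧ SatNHP G a0 k I σ ∧
  ∀ h, IsNode G a0 k I h → ¬ Terminal G a0 h →
    ∀ τ : Strategy G (I h),
      ValidProfile G a0 k I (Function.update σ (I h) τ) →
      SatNHP G a0 k I (Function.update σ (I h) τ) →
      G.u (I h) (outcomeFrom G a0 k I (Function.update σ (I h) τ) h) ≤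
        G.u (I h) (outcomeFrom G a0 k I σ h)

/-- Subgame perfect equilibrium of `Γ(a0,k,I)` (no NHP constraint). -/
def SPE (G : Game n) (a0 : Profile G) (k : ℕ) (I : Hist G → Fin n)
    (σ : StratProfile G) : Prop :=
  ValidProfile G a0 k I σ ∧
  ∀ h, IsNode G a0 k I h → ¬ Terminal G a0 h →
    ∀ τ : Strategy G (I h),
      ValidProfile G a0 k I (Function.update σ (I h) τ) →
      G.u (I h) (outcomeFrom G a0 k I (Function.update σ (I h) τ) h) ≤
        G.u (I h) (outcomeFrom G a0 k I σ h)

/-- `b` Pareto dominates `a`. -/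
def ParetoDom (G : Game n) (b a : Profile G) : Prop :=
  (∀ i, G.u i a ≤ G.u i b) ∧ ∃ i, G.u i a < G.u i b

/-- `a` is Pareto optimal. -/
def ParetoOpt (G : Game n) (a : Profile G) : Prop := ∀ b, ¬ ParetoDom G b a

/-- `b` strictly Pareto dominates `a`. -/
def StrictDom (G : Game n) (b a : Profile G) : Prop := ∀ i, G.u i a < G.u i b

/-- `a` is weakly Pareto optimal. -/
def WeakParetoOpt (G : Game n) (a : Profile G) : Prop := ∀ b, ¬ StrictDom G b a

/-- Preferences are strict: each utility function is injective on profiles. -/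
def StrictPrefs (G : Game n) : Prop := ∀ i, Function.Injective (G.u i)

section Play

open Classical

variable {G : Game n} {a0 : Profile G} {I : Hist G → Fin n}

lemma playN_succ (σ : StratProfile G) (t : ℕ) (h : Hist G) :
    playN G a0 I σ (t + 1) h =
      if Terminal G a0 h then h else playN G a0 I σ t (h ++ [⟨I h, σ (I h) h⟩]) :=
  rfl

lemma playN_of_terminal (σ : StratProfile G) {h : Hist G} (hT : Terminal G a0 h) :
    ∀ t, playN G a0 I σ t h = h
  | 0 => rfl
  | _ + 1 => by rw [playN_succ, if_pos hT]

lemma playN_add_of_terminal (σ : StratProfile G) {t : ℕ} {h : Hist G}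
    (hT : Terminal G a0 (playN G a0 I σ t h)) (s : ℕ) :
    playN G a0 I σ (t + s) h = playN G a0 I σ t h := by
  induction t generalizing h with
  | zero => rw [Nat.zero_add]; exact playN_of_terminal σ hT s
  | succ t ih =>
    by_cases hTh : Terminal G a0 h
    · rw [playN_of_terminal σ hTh, playN_of_terminal σ hTh]
    · rw [playN_succ, if_neg hTh] at hT ⊢
      rw [Nat.add_right_comm, playN_succ, if_neg hTh]
      exact ih hT

lemma playN_congr {σ₁ σ₂ : StratProfile G} {h : Hist G}
    (hσ : ∀ g : Hist G, h.length ≤ g.length → ∀ j, σ₁ j g = σ₂ j g) (t : ℕ) :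
    playN G a0 I σ₁ t h = playN G a0 I σ₂ t h := by
  induction t generalizing h with
  | zero => rfl
  | succ t ih =>
    rw [playN_succ, playN_succ, hσ h le_rfl]
    refine if_congr Iff.rfl rfl (ih fun g hg j => hσ g ?_ j)
    simp only [List.length_append, List.length_singleton] at hg
    omega

end Play

section Node

variable {G : Game n} {a0 : Profile G} {k : ℕ} {I : Hist G → Fin n}

lemma isNode_nil : IsNode G a0 k I [] :=
  ⟨nofun, nofun, nofun⟩

lemma IsNode.take {h : Hist G} (hh : IsNode G a0 k I h) (s : ℕ) :
    IsNode G a0 k I (h.take s) := by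
  refine ⟨fun t ht => ?_, fun t ht => ?_, fun t ht => ?_⟩ <;>
    obtain ⟨hts, htl⟩ : t < s ∧ t < h.length := by simpa using ht
  · simpa [List.take_take, hts.le] using hh.mover t htl
  · rw [show (h.take s).get ⟨t, ht⟩ = h.get ⟨t, htl⟩ by simp, List.take_take, min_eq_left hts.le]
    exact hh.avail t htl
  · simpa [List.take_take, hts.le] using hh.nonterm t htl

lemma IsNode.append {h : Hist G} (hh : IsNode G a0 k I h) (hT : ¬ Terminal G a0 h)
    {c : Option (G.A (I h))} (hc : availAct G a0 k h c) :
    IsNode G a0 k I (h ++ [⟨I h, c⟩]) := by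
  refine ⟨fun t ht => ?_, fun t ht => ?_, fun t ht => ?_⟩ <;>
    obtain htl | rfl : t < h.length ∨ t = h.length := by
      simp only [List.length_append, List.length_singleton] at ht; omega
  · simpa [List.getElem_append_left htl, List.take_append_of_le_length htl.le]
      using hh.mover t htl
  · simp
  · rw [show (h ++ [(⟨I h, c⟩ : Move G)]).get ⟨t, ht⟩ = h.get ⟨t, htl⟩ by simp [htl],
      List.take_append_of_le_length htl.le]
    exact hh.avail t htl
  · rw [show (h ++ [(⟨I h, c⟩ : Move G)]).get ⟨h.length, ht⟩ = ⟨I h, c⟩ by simp, List.take_left]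
    exact hc
  · simpa [List.take_append_of_le_length htl.le] using hh.nonterm t htl
  · simpa using hT

end Node

lemma eq_of_sum_eq_card_mul_of_le_add_one {ι : Type*} [Fintype ι] {f : ι → ℕ} {b : ℕ}
    (hf : ∀ i j, f i ≤ f j + 1) (hsum : ∑ i, f i = Fintype.card ι * b) (i : ι) : f i = b := by
  by_contra hne
  rcases Nat.lt_or_gt_of_ne hne with hlt | hgt
  · have : ∑ j, f j < ∑ _j : ι, b :=
      Finset.sum_lt_sum (fun j _ => by have := hf j i; omega) ⟨i, Finset.mem_univ i, hlt⟩
    simp [hsum] at this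
  · have : ∑ _j : ι, b < ∑ j, f j :=
      Finset.sum_lt_sum (fun j _ => by have := hf i j; omega) ⟨i, Finset.mem_univ i, hgt⟩
    simp [hsum, mul_comm] at this

lemma sum_count_eq_length {α : Type*} [Fintype α] [DecidableEq α] (l : List α) :
    ∑ a, l.count a = l.length := by
  simpa using Multiset.sum_count_eq_card (s := Finset.univ) (m := (l : Multiset α)) (by simp)

section Termination

variable {G : Game n} {a0 : Profile G} {k : ℕ} {I : Hist G → Fin n}

lemma IsNode.not_terminal_take {h : Hist G} (hh : IsNode G a0 k I h) (hT : ¬ Terminal G a0 h)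
    (s : ℕ) : ¬ Terminal G a0 (h.take s) := by
  rcases lt_or_ge s h.length with hs | hs
  · exact hh.nonterm s hs
  · rwa [List.take_of_length_le hs]

/-- Admissibility forces the players to move in rounds of `n`. -/
lemma Admissible.count_take_mul (hI : Admissible G a0 k I) {h : Hist G}
    (hh : IsNode G a0 k I h) {b : ℕ} (hb : n * b ≤ h.length) (i : Fin n) :
    ((h.map Sigma.fst).take (n * b)).count i = b := by
  refine eq_of_sum_eq_card_mul_of_le_add_one
    (f := fun j => ((h.map Sigma.fst).take (n * b)).count j) (fun i j => ?_) ?_ i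
  · simpa [List.map_take] using hI _ (hh.take (n * b)) i j
  · rw [sum_count_eq_length, Fintype.card_fin]
    simpa using hb

def nonPassIdx (h : Hist G) : Finset ℕ :=
  (Finset.range h.length).filter fun t => ∃ (i : Fin n) (a : G.A i), h[t]? = some ⟨i, some a⟩

lemma exists_mem_nonPassIdx_div_eq (hI : Admissible G a0 k I) {h : Hist G}
    (hh : IsNode G a0 k I h) (hT : ¬ Terminal G a0 h) {b : ℕ} (hb : n * (b + 1) ≤ h.length) :
    ∃ t ∈ nonPassIdx h, t / n = b := by
  -- otherwise the round ending at `n * (b + 1)` consists of passes by all players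
  by_contra! hpass
  have hn : 0 < n := (I []).pos
  have hqn : n * (b + 1) = n * b + n := Nat.mul_succ n b
  have hlen : (h.take (n * (b + 1))).length = n * b + n := by
    rw [List.length_take_of_le hb, hqn]
  apply hh.not_terminal_take hT (n * (b + 1))
  refine Or.inr ?_
  rw [TerminalPass, hlen, Nat.add_sub_cancel]
  refine ⟨by omega, fun m hm => ?_, fun i => ?_⟩
  · obtain ⟨s, hs, rfl⟩ := List.mem_iff_getElem.1 hm
    rw [List.length_drop, hlen, Nat.add_sub_cancel_left] at hs
    rw [List.getElem_drop, List.getElem_take]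
    rcases hc : h[n * b + s].2 with _ | a
    · rfl
    · have hmem : n * b + s ∈ nonPassIdx h := Finset.mem_filter.2
        ⟨Finset.mem_range.2 (by omega), _, a, by rw [List.getElem?_eq_getElem (by omega), ← hc]⟩
      exact absurd (Nat.div_eq_of_lt_le (by linarith) (by linarith)) (hpass _ hmem)
  · have hcount := hI.count_take_mul hh hb i
    rw [← List.take_append_drop (n * b) ((h.map Sigma.fst).take (n * (b + 1))),
      List.count_append, List.take_take, min_eq_left (by omega),
      hI.count_take_mul hh (by omega) i, ← List.map_take, ← List.map_drop] at hcount
    have hpos : 0 < (((h.take (n * (b + 1))).drop (n * b)).map Sigma.fst).count i := by omega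
    obtain ⟨m, hm, rfl⟩ := List.mem_map.1 (List.count_pos_iff.1 hpos)
    exact ⟨m, hm, rfl⟩

lemma length_div_le_card_nonPassIdx (hI : Admissible G a0 k I) {h : Hist G}
    (hh : IsNode G a0 k I h) (hT : ¬ Terminal G a0 h) :
    h.length / n ≤ (nonPassIdx h).card := by
  have hn : 0 < n := (I []).pos
  calc h.length / n = (Finset.range (h.length / n)).card := (Finset.card_range _).symm
    _ ≤ ((nonPassIdx h).image (· / n)).card := Finset.card_le_card fun b hb => by
        have hb' := (Nat.le_div_iff_mul_le hn).1 (Finset.mem_range.1 hb)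
        obtain ⟨t, ht, htb⟩ := exists_mem_nonPassIdx_div_eq hI hh hT (b := b) (by linarith)
        exact Finset.mem_image.2 ⟨t, ht, htb⟩
    _ ≤ (nonPassIdx h).card := Finset.card_image_le

/-- Availability: a given action is taken at most `k` times at a given state. -/
lemma card_filter_nonPassIdx_le {h : Hist G} (hh : IsNode G a0 k I h)
    (p : Option (Move G) × Profile G) :
    ((nonPassIdx h).filter fun t => (h[t]?, state G a0 (h.take t)) = p).card ≤ k := by
  set F := (nonPassIdx h).filter fun t => (h[t]?, state G a0 (h.take t)) = p
  rcases F.eq_empty_or_nonempty with hF | hF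
  · simp [hF]
  have hTF := F.max'_mem hF
  set T := F.max' hF
  obtain ⟨hTnp, hfT⟩ := Finset.mem_filter.1 hTF
  obtain ⟨hTlen, i, a, hTa⟩ := Finset.mem_filter.1 hTnp
  rw [Finset.mem_range] at hTlen
  have hcount : countAct G a0 (h.take T) ⟨i, some a⟩ < k := by
    have hget : h.get ⟨T, hTlen⟩ = ⟨i, some a⟩ :=
      Option.some.inj ((List.getElem?_eq_getElem hTlen).symm.trans hTa)
    have hav := hh.avail T hTlen
    rw [hget] at hav
    exact hav a rfl
  have hsub : F.erase T ⊆ (Finset.range (h.take T).length).filter fun t =>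
      (h.take T)[t]? = some ⟨i, some a⟩ ∧ state G a0 ((h.take T).take t) = state G a0 (h.take T) := by
    intro t ht
    obtain ⟨htT, htF⟩ := Finset.mem_erase.1 ht
    have htlt : t < T := lt_of_le_of_ne (F.le_max' t htF) htT
    have hft := (Finset.mem_filter.1 htF).2
    rw [← hfT, Prod.mk.injEq, hTa] at hft
    simpa [List.getElem?_take, htlt, List.take_take, htlt.le, hTlen.le] using hft
  calc F.card = (F.erase T).card + 1 := (Finset.card_erase_add_one hTF).symm
    _ ≤ countAct G a0 (h.take T) ⟨i, some a⟩ + 1 := by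
        unfold countAct
        exact Nat.add_le_add_right (Finset.card_le_card hsub) 1
    _ ≤ k := hcount

lemma card_nonPassIdx_le {h : Hist G} (hh : IsNode G a0 k I h) :
    (nonPassIdx h).card ≤ k * Fintype.card (Option (Move G) × Profile G) := by
  rw [← Finset.card_univ]
  exact Finset.card_le_mul_card_image_of_maps_to (fun _ _ => Finset.mem_univ _) k
    fun p _ => card_filter_nonPassIdx_le hh p

lemma mul_card_add_one_le_bound (G : Game n) (k : ℕ) :
    n * (k * Fintype.card (Option (Move G) × Profile G) + 1) ≤ bound G k := by
  have hS : n ≤ ∑ i, Fintype.card (G.A i) :=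
    calc n = ∑ _i : Fin n, 1 := by simp
      _ ≤ ∑ i, Fintype.card (G.A i) := Finset.sum_le_sum fun i _ => Fintype.card_pos
  rw [Fintype.card_prod, Fintype.card_option, Fintype.card_sigma, bound]
  simp only [Fintype.card_option, Finset.sum_add_distrib, Finset.sum_const, Finset.card_univ,
    Fintype.card_fin, smul_eq_mul, mul_one]
  generalize ∑ i, Fintype.card (G.A i) = S at hS
  have hP : 1 ≤ Fintype.card (Profile G) := Fintype.card_pos
  generalize Fintype.card (Profile G) = P at hP
  have hX : k * ((S + n + 1) * P) ≤ 2 * ((k + 2) * (P + 2) * (S + 2)) :=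
    calc k * ((S + n + 1) * P) ≤ (k + 2) * ((2 * (S + 2)) * (P + 2)) := by gcongr <;> omega
      _ = 2 * ((k + 2) * (P + 2) * (S + 2)) := by ring
  generalize (k + 2) * (P + 2) * (S + 2) = X at hX
  nlinarith

lemma length_lt_bound (hI : Admissible G a0 k I) {h : Hist G} (hh : IsNode G a0 k I h)
    (hT : ¬ Terminal G a0 h) : h.length < bound G k :=
  calc h.length < n * (h.length / n + 1) := Nat.lt_mul_div_succ _ (I []).pos
    _ ≤ n * (k * Fintype.card (Option (Move G) × Profile G) + 1) := by
        gcongr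
        exact (length_div_le_card_nonPassIdx hI hh hT).trans (card_nonPassIdx_le hh)
    _ ≤ bound G k := mul_card_add_one_le_bound G k

end Termination

section Equilibrium

variable {G : Game n} {a0 : Profile G} {k : ℕ} {I : Hist G → Fin n}

lemma terminal_playN (hI : Admissible G a0 k I) {σ : StratProfile G}
    (hσ : ValidProfile G a0 k I σ) {t : ℕ} {h : Hist G} (hh : IsNode G a0 k I h)
    (ht : bound G k ≤ h.length + t) : Terminal G a0 (playN G a0 I σ t h) := by
  induction t generalizing h with
  | zero =>
    by_contra hT
    have := length_lt_bound hI hh hT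
    omega
  | succ t ih =>
    by_cases hT : Terminal G a0 h
    · rwa [playN_of_terminal σ hT]
    · rw [playN_succ, if_neg hT]
      refine ih (hh.append hT (hσ h hh hT)) ?_
      simp only [List.length_append, List.length_singleton]
      omega

lemma outcomeFrom_of_terminal (σ : StratProfile G) {h : Hist G} (hT : Terminal G a0 h) :
    outcomeFrom G a0 k I σ h = refpt G a0 h := by
  rw [outcomeFrom, playN_of_terminal σ hT]

lemma update_update_apply_of_ne (σ : StratProfile G) {i : Fin n} {h g : Hist G}
    (c : Option (G.A i)) (hg : g ≠ h) (j : Fin n) :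
    Function.update σ i (Function.update (σ i) h c) j g = σ j g := by
  rcases eq_or_ne j i with rfl | hj
  · simp [hg]
  · simp [hj]

lemma ValidProfile.update_update {σ : StratProfile G} (hσ : ValidProfile G a0 k I σ)
    {h : Hist G} {c : Option (G.A (I h))} (hc : availAct G a0 k h c) :
    ValidProfile G a0 k I (Function.update σ (I h) (Function.update (σ (I h)) h c)) := by
  intro g hg hgT
  rcases eq_or_ne g h with rfl | hgh
  · simpa using hc
  · rw [update_update_apply_of_ne σ c hgh]
    exact hσ g hg hgT

lemma outcomeFrom_update_update (hI : Admissible G a0 k I) {σ : StratProfile G}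
    (hσ : ValidProfile G a0 k I σ) {h : Hist G} (hh : IsNode G a0 k I h)
    (hT : ¬ Terminal G a0 h) {c : Option (G.A (I h))} (hc : availAct G a0 k h c) :
    outcomeFrom G a0 k I (Function.update σ (I h) (Function.update (σ (I h)) h c)) h =
      outcomeFrom G a0 k I σ (h ++ [⟨I h, c⟩]) := by
  have hagree : ∀ g : Hist G, (h ++ [(⟨I h, c⟩ : Move G)]).length ≤ g.length →
      ∀ j, Function.update σ (I h) (Function.update (σ (I h)) h c) j g = σ j g := by
    intro g hg
    refine update_update_apply_of_ne σ c ?_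
    rintro rfl
    simp at hg
  have hterm := terminal_playN hI hσ (t := bound G k) (hh.append hT hc) (by omega)
  rw [outcomeFrom, playN_succ, if_neg hT, Function.update_self, Function.update_self,
    playN_congr hagree, outcomeFrom, playN_add_of_terminal σ hterm 1]

lemma outcomeFrom_eq_append (hI : Admissible G a0 k I) {σ : StratProfile G}
    (hσ : ValidProfile G a0 k I σ) {h : Hist G} (hh : IsNode G a0 k I h)
    (hT : ¬ Terminal G a0 h) :
    outcomeFrom G a0 k I σ h = outcomeFrom G a0 k I σ (h ++ [⟨I h, σ (I h) h⟩]) := by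
  simpa using outcomeFrom_update_update hI hσ hh hT (hσ h hh hT)

/-- Deviating once from `σ` to the move of `σ'` at `h` yields the outcome of `σ'`. -/
lemma SPE.u_outcomeFrom_le (hI : Admissible G a0 k I) {σ σ' : StratProfile G}
    (hσ : SPE G a0 k I σ) (hσ' : ValidProfile G a0 k I σ') {h : Hist G}
    (hh : IsNode G a0 k I h) (hT : ¬ Terminal G a0 h)
    (hafter : outcomeFrom G a0 k I σ (h ++ [⟨I h, σ' (I h) h⟩]) =
      outcomeFrom G a0 k I σ' (h ++ [⟨I h, σ' (I h) h⟩])) :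
    G.u (I h) (outcomeFrom G a0 k I σ' h) ≤ G.u (I h) (outcomeFrom G a0 k I σ h) := by
  have hc := hσ' h hh hT
  have hdev := hσ.2 h hh hT _ (hσ.1.update_update hc)
  rwa [outcomeFrom_update_update hI hσ.1 hh hT hc, hafter,
    ← outcomeFrom_eq_append hI hσ' hh hT] at hdev

theorem outcomeFrom_eq_of_SPE (hG : StrictPrefs G) (hI : Admissible G a0 k I)
    {σ σ' : StratProfile G} (hσ : SPE G a0 k I σ) (hσ' : SPE G a0 k I σ') (h : Hist G)
    (hh : IsNode G a0 k I h) : outcomeFrom G a0 k I σ h = outcomeFrom G a0 k I σ' h := by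
  by_cases hT : Terminal G a0 h
  · rw [outcomeFrom_of_terminal σ hT, outcomeFrom_of_terminal σ' hT]
  have hlen := length_lt_bound hI hh hT
  have hafter (c : Option (G.A (I h))) (hc : availAct G a0 k h c) :
      outcomeFrom G a0 k I σ (h ++ [⟨I h, c⟩]) = outcomeFrom G a0 k I σ' (h ++ [⟨I h, c⟩]) :=
    outcomeFrom_eq_of_SPE hG hI hσ hσ' _ (hh.append hT hc)
  exact hG (I h) (le_antisymm
    (hσ'.u_outcomeFrom_le hI hσ.1 hh hT (hafter _ (hσ.1 h hh hT)).symm)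
    (hσ.u_outcomeFrom_le hI hσ'.1 hh hT (hafter _ (hσ'.1 h hh hT))))
termination_by bound G k - h.length
decreasing_by
  simp only [List.length_append, List.length_singleton]
  omega

end Equilibrium

theorem spe_outcome_unique_general {n : ℕ} (G : Game n) (hG : StrictPrefs G)
    (a0 : Profile G) (k : ℕ) (I : Hist G → Fin n)
    (hI : Admissible G a0 k I) (σ σ' : StratProfile G)
    (hσ : SPE G a0 k I σ) (hσ' : SPE G a0 k I σ') :
    outcome G a0 k I σ = outcome G a0 k I σ' :=
  outcomeFrom_eq_of_SPE hG hI hσ hσ' [] isNode_nil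

/-- With strict preferences, any two subgame perfect
equilibria of `Γ(a0,k,I)` have the same outcome. -/
theorem spe_outcome_unique {n : ℕ} (hn : 2 ≤ n) (G : Game n) (hG : StrictPrefs G)
    (a0 : Profile G) (k : ℕ) (hk : 0 < k) (I : Hist G → Fin n)
    (hI : Admissible G a0 k I) (σ σ' : StratProfile G)
    (hσ : SPE G a0 k I σ) (hσ' : SPE G a0 k I σ') :
    outcome G a0 k I σ = outcome G a0 k I σ' :=
  spe_outcome_unique_general G hG a0 k I hI σ σ' hσ hσ'

end NoHarm
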